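/- If a Lie subalgebra g of spo_N(R) contains W_{ii} for all i ∈ {1,…,N} and W_{i,i+1} for all i ∈ {1,…,N-1}, then g = spo_N(R). -/

import Mathlib

open Matrix

attribute [local instance 100] LieRing.ofAssociativeRing

noncomputable section

/-- The operator `M ↦ Mˢ`, `(Mˢ)_{ij} = (-1)^{i-j+1} M_{ji}`. -/
def sOp (N : ℕ) (M : Matrix (Fin N) (Fin N) ℝ) : Matrix (Fin N) (Fin N) ℝ :=
  Matrix.of fun i j => (-1 : ℝ) ^ (((i : ℕ) : ℤ) - ((j : ℕ) : ℤ) + 1) * M j i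

/-- The Lie algebra `spo_N(ℝ) = {[[A,B],[Bˢ,-Aᵀ]] : Aˢ = A, Bᵀ = B}`, as a set of matrices. -/
def spoSet (N : ℕ) : Set (Matrix (Fin N ⊕ Fin N) (Fin N ⊕ Fin N) ℝ) :=
  {X | ∃ A B : Matrix (Fin N) (Fin N) ℝ, sOp N A = A ∧ Bᵀ = B ∧
    X = Matrix.fromBlocks A B (sOp N B) (-Aᵀ)}

/-- `W_{ij} = [[0, E_{ij}+E_{ji}], [(-1)^{i-j+1}(E_{ij}+E_{ji}), 0]]`. -/
def Wmat (N : ℕ) (i j : Fin N) : Matrix (Fin N ⊕ Fin N) (Fin N ⊕ Fin N) ℝ :=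
  Matrix.fromBlocks 0
    (Matrix.single i j 1 + Matrix.single j i 1)
    (((-1 : ℝ) ^ (((i : ℕ) : ℤ) - ((j : ℕ) : ℤ) + 1)) •
      (Matrix.single i j 1 + Matrix.single j i 1))
    0

/-! Bracketing `W_{ii}` with `W_{i,i+1}` gives `2 V_{i,i+1}`, and `[V_{ik}, V_{kj}] = V_{ij}` for
`i ≠ k ≠ j`, so the chains `V_{i,i+1}, V_{i+1,i+2}, …` produce every `V_{ij}` with `i < j`; the
others follow from `V_{ii} = 0` and `V_{ij} = ±V_{ji}`. Then `[V_{ij}, W_{jj}] = 2 W_{ij}` gives every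
`W_{ij}`, and the `V_{ij}`, `W_{ij}` span `spo_N(ℝ)`. -/

section LieFromBlocks

variable {m n R : Type*} [Fintype m] [Fintype n] [DecidableEq m] [DecidableEq n] [Ring R]

lemma Matrix.lie_fromBlocks (A A' : Matrix m m R) (B B' : Matrix m n R) (C C' : Matrix n m R)
    (D D' : Matrix n n R) :
    ⁅fromBlocks A B C D, fromBlocks A' B' C' D'⁆ =
      fromBlocks (A * A' + B * C' - (A' * A + B' * C)) (A * B' + B * D' - (A' * B + B' * D))
        (C * A' + D * C' - (C' * A + D' * C)) (C * B' + D * D' - (C' * B + D' * D)) := by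
  rw [Ring.lie_def, fromBlocks_multiply, fromBlocks_multiply]
  ext (i | i) (j | j) <;> rfl

end LieFromBlocks

namespace Spo

variable {N : ℕ}

def spoSign (i j : Fin N) : ℝ := (-1 : ℝ) ^ (((i : ℕ) : ℤ) - ((j : ℕ) : ℤ) + 1)

lemma spoSign_self (i : Fin N) : spoSign i i = -1 := by
  rw [spoSign, sub_self, zero_add, zpow_one]

lemma spoSign_of_val_eq_succ {i j : Fin N} (h : (j : ℕ) = i + 1) : spoSign i j = 1 := by
  rw [spoSign, show ((i : ℕ) : ℤ) - ((j : ℕ) : ℤ) + 1 = 0 by omega, zpow_zero]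

lemma spoSign_mul_spoSign (i k j : Fin N) : spoSign i k * spoSign k j = -spoSign i j := by
  rw [spoSign, spoSign, spoSign, ← zpow_add₀ (by norm_num),
    show ((i : ℕ) : ℤ) - k + 1 + (k - j + 1) = (i - j + 1) + 1 by ring, zpow_add_one₀ (by norm_num),
    mul_neg_one]

lemma spoSign_mul_self (i j : Fin N) : spoSign i j * spoSign i j = 1 := by
  rw [spoSign, ← mul_zpow, neg_one_mul, neg_neg, _root_.one_zpow]

lemma spoSign_comm (i j : Fin N) : spoSign i j = spoSign j i := by
  have h : spoSign i j * spoSign j i = 1 := by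
    rw [spoSign_mul_spoSign, spoSign_self, neg_neg]
  calc spoSign i j = spoSign i j * (spoSign j i * spoSign j i) := by rw [spoSign_mul_self, mul_one]
    _ = spoSign j i := by rw [← mul_assoc, h, one_mul]

lemma sOp_single (i j : Fin N) (c : ℝ) : sOp N (single i j c) = single j i (spoSign j i * c) := by
  ext k l
  simp only [sOp, of_apply, single_apply]
  split_ifs <;> simp_all [spoSign]

lemma sOp_add (M M' : Matrix (Fin N) (Fin N) ℝ) : sOp N (M + M') = sOp N M + sOp N M' := by
  ext k l
  simp only [sOp, of_apply, Matrix.add_apply, mul_add]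

lemma sOp_smul (c : ℝ) (M : Matrix (Fin N) (Fin N) ℝ) : sOp N (c • M) = c • sOp N M := by
  ext k l
  simp only [sOp, of_apply, Matrix.smul_apply, smul_eq_mul, mul_left_comm]

def symmUnit (i j : Fin N) : Matrix (Fin N) (Fin N) ℝ := single i j 1 + single j i 1

def Vblock (i j : Fin N) : Matrix (Fin N) (Fin N) ℝ := single i j 1 + spoSign i j • single j i 1

lemma sOp_symmUnit (i j : Fin N) : sOp N (symmUnit i j) = spoSign i j • symmUnit i j := by
  rw [symmUnit, sOp_add, sOp_single, sOp_single, spoSign_comm j i, mul_one, smul_add,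
    smul_single, smul_single, smul_eq_mul, mul_one, add_comm]

/-- The paper's `V_{ij}`: its lower-right block `(-1)^{i-j} E_{ij} - E_{ji}` is `-(Vblock i j)ᵀ`. -/
def Vmat (N : ℕ) (i j : Fin N) : Matrix (Fin N ⊕ Fin N) (Fin N ⊕ Fin N) ℝ :=
  fromBlocks (Vblock i j) 0 0 (-(Vblock i j)ᵀ)

lemma Wmat_eq_fromBlocks (i j : Fin N) :
    Wmat N i j = fromBlocks 0 (symmUnit i j) (spoSign i j • symmUnit i j) 0 := rfl

lemma Vmat_self (i : Fin N) : Vmat N i i = 0 := by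
  rw [Vmat, Vblock, spoSign_self, neg_one_smul, add_neg_cancel, transpose_zero, neg_zero,
    fromBlocks_zero]

lemma Vmat_comm (i j : Fin N) : Vmat N i j = spoSign i j • Vmat N j i := by
  have h : Vblock i j = spoSign i j • Vblock j i := by
    rw [Vblock, Vblock, smul_add, smul_smul, spoSign_comm i j, spoSign_mul_self, one_smul,
      add_comm]
  rw [Vmat, Vmat, fromBlocks_smul, h, transpose_smul, smul_neg, smul_zero]

lemma lie_Wmat_self_Wmat {i j : Fin N} (hs : spoSign i j = 1) :
    ⁅Wmat N i i, Wmat N i j⁆ = (2 : ℝ) • Vmat N i j := by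
  have hij : i ≠ j := by
    rintro rfl
    norm_num [spoSign_self] at hs
  rw [Wmat_eq_fromBlocks, Wmat_eq_fromBlocks, lie_fromBlocks, Vmat, fromBlocks_smul]
  refine fromBlocks_inj.2 ⟨?_, ?_, ?_, ?_⟩ <;>
    simp only [symmUnit, Vblock, hs, spoSign_self, one_smul, neg_one_smul, mul_zero, zero_mul,
      add_zero, sub_zero, zero_sub, zero_add, add_mul, mul_add, neg_mul, mul_neg,
      single_mul_single_same, single_mul_single_of_ne _ _ _ _ hij,
      single_mul_single_of_ne _ _ _ _ hij.symm, transpose_add, transpose_single, mul_one,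
      smul_zero, neg_add, neg_neg, smul_add, smul_neg] <;>
    module

lemma lie_Vmat_Vmat {i k j : Fin N} (hik : i ≠ k) (hkj : k ≠ j) :
    ⁅Vmat N i k, Vmat N k j⁆ = Vmat N i j := by
  obtain rfl | hij := eq_or_ne i j
  · rw [Vmat_comm k i, lie_smul, lie_self, smul_zero, Vmat_self]
  rw [Vmat, Vmat, Vmat, lie_fromBlocks]
  refine fromBlocks_inj.2 ⟨?_, by simp, by simp, ?_⟩ <;>
    simp only [Vblock, transpose_add, transpose_smul, transpose_single, add_mul, mul_add,
      neg_mul, mul_neg, smul_mul_assoc, mul_smul_comm, single_mul_single_same, mul_one,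
      single_mul_single_of_ne _ _ _ _ hik, single_mul_single_of_ne _ _ _ _ hik.symm,
      single_mul_single_of_ne _ _ _ _ hkj, single_mul_single_of_ne _ _ _ _ hkj.symm,
      single_mul_single_of_ne _ _ _ _ hij, single_mul_single_of_ne _ _ _ _ hij.symm,
      smul_zero, smul_neg, smul_smul, neg_neg, neg_zero, add_zero, zero_add,
      neg_add, spoSign_mul_spoSign, mul_comm (spoSign k j)] <;>
    module

lemma lie_Vmat_Wmat_self {i j : Fin N} (hij : i ≠ j) :
    ⁅Vmat N i j, Wmat N j j⁆ = (2 : ℝ) • Wmat N i j := by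
  rw [Vmat, Wmat_eq_fromBlocks, Wmat_eq_fromBlocks, lie_fromBlocks, fromBlocks_smul]
  refine fromBlocks_inj.2 ⟨by simp, ?_, ?_, by simp⟩ <;>
    simp only [symmUnit, Vblock, spoSign_self, transpose_add, transpose_smul, transpose_single,
      add_mul, mul_add, neg_mul, mul_neg, smul_mul_assoc, mul_smul_comm, single_mul_single_same,
      mul_one, single_mul_single_of_ne _ _ _ _ hij, single_mul_single_of_ne _ _ _ _ hij.symm,
      smul_zero, smul_add, smul_neg, smul_smul, neg_neg, neg_zero, add_zero, zero_add, neg_add,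
      neg_one_smul, mul_zero] <;>
    module

def spoDiag (N : ℕ) : Matrix (Fin N) (Fin N) ℝ →ₗ[ℝ] Matrix (Fin N ⊕ Fin N) (Fin N ⊕ Fin N) ℝ where
  toFun A := fromBlocks A 0 0 (-Aᵀ)
  map_add' A A' := by rw [transpose_add, neg_add, fromBlocks_add, add_zero]
  map_smul' c A := by
    rw [RingHom.id_apply, fromBlocks_smul, transpose_smul, smul_neg, smul_zero]

def spoOffDiag (N : ℕ) : Matrix (Fin N) (Fin N) ℝ →ₗ[ℝ] Matrix (Fin N ⊕ Fin N) (Fin N ⊕ Fin N) ℝ where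
  toFun B := fromBlocks 0 B (sOp N B) 0
  map_add' B B' := by rw [sOp_add, fromBlocks_add, add_zero]
  map_smul' c B := by rw [RingHom.id_apply, fromBlocks_smul, sOp_smul, smul_zero]

lemma spoDiag_Vblock (i j : Fin N) : spoDiag N (Vblock i j) = Vmat N i j := rfl

lemma spoOffDiag_symmUnit (i j : Fin N) : spoOffDiag N (symmUnit i j) = Wmat N i j := by
  rw [Wmat_eq_fromBlocks, ← sOp_symmUnit]
  rfl

lemma sum_smul_Vblock (A : Matrix (Fin N) (Fin N) ℝ) :
    ∑ i, ∑ j, A i j • Vblock i j = A + sOp N A := by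
  ext k l
  have hs : sOp N A k l = spoSign l k * A l k := by rw [spoSign_comm]; rfl
  simp only [Vblock, smul_add, smul_smul, Matrix.sum_apply, Matrix.add_apply, Matrix.smul_apply,
    single_apply, smul_eq_mul, mul_ite, mul_one, mul_zero, ite_and, Finset.sum_add_distrib,
    Finset.sum_ite_eq', Finset.sum_ite_irrel, Finset.sum_const_zero, Finset.mem_univ, if_true, hs]
  ring

lemma sum_smul_symmUnit (B : Matrix (Fin N) (Fin N) ℝ) :
    ∑ i, ∑ j, B i j • symmUnit i j = B + Bᵀ := by
  ext k l
  simp only [symmUnit, smul_add, Matrix.sum_apply, Matrix.add_apply, Matrix.smul_apply,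
    single_apply, smul_eq_mul, mul_ite, mul_one, mul_zero, ite_and, Finset.sum_add_distrib,
    Finset.sum_ite_eq', Finset.sum_ite_irrel, Finset.sum_const_zero, Finset.mem_univ, if_true,
    transpose_apply]

lemma spoDiag_add_spoOffDiag (A B : Matrix (Fin N) (Fin N) ℝ) :
    spoDiag N A + spoOffDiag N B = fromBlocks A B (sOp N B) (-Aᵀ) := by
  rw [spoDiag, spoOffDiag, LinearMap.coe_mk, LinearMap.coe_mk, AddHom.coe_mk, AddHom.coe_mk,
    fromBlocks_add, add_zero, add_zero, zero_add, zero_add]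

lemma spoSet_subset_of_forall_mem
    {p : Submodule ℝ (Matrix (Fin N ⊕ Fin N) (Fin N ⊕ Fin N) ℝ)}
    (hV : ∀ i j, Vmat N i j ∈ p) (hW : ∀ i j, Wmat N i j ∈ p) : spoSet N ⊆ p := by
  rintro _ ⟨A, B, hA, hB, rfl⟩
  -- `A + Aˢ = 2A` and `B + Bᵀ = 2B`, so the coefficients `A i j`, `B i j` expand twice the matrix.
  have h2X : (2 : ℝ) • fromBlocks A B (sOp N B) (-Aᵀ) =
      ∑ i, ∑ j, A i j • Vmat N i j + ∑ i, ∑ j, B i j • Wmat N i j := by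
    simp_rw [← spoDiag_Vblock, ← spoOffDiag_symmUnit, ← map_smul, ← map_sum, sum_smul_Vblock,
      sum_smul_symmUnit, hA, hB, ← two_smul ℝ, map_smul, ← smul_add, spoDiag_add_spoOffDiag]
  rw [SetLike.mem_coe, ← p.smul_mem_iff (two_ne_zero' ℝ), h2X]
  exact add_mem (sum_mem fun i _ => sum_mem fun j _ => p.smul_mem _ (hV i j))
    (sum_mem fun i _ => sum_mem fun j _ => p.smul_mem _ (hW i j))

section Generation

variable {g : LieSubalgebra ℝ (Matrix (Fin N ⊕ Fin N) (Fin N ⊕ Fin N) ℝ)}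

lemma Vmat_mem_of_val_eq_succ (hWii : ∀ i, Wmat N i i ∈ g)
    (hWsucc : ∀ i j : Fin N, (j : ℕ) = i + 1 → Wmat N i j ∈ g) {i j : Fin N}
    (hij : (j : ℕ) = i + 1) : Vmat N i j ∈ g := by
  have h := g.lie_mem (hWii i) (hWsucc i j hij)
  rw [lie_Wmat_self_Wmat (spoSign_of_val_eq_succ hij)] at h
  exact (g.toSubmodule.smul_mem_iff (two_ne_zero' ℝ)).1 h

lemma Vmat_mem_of_lt (hsucc : ∀ i j : Fin N, (j : ℕ) = i + 1 → Vmat N i j ∈ g) {i j : Fin N}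
    (hij : i < j) : Vmat N i j ∈ g := by
  obtain ⟨j, hj⟩ := j
  replace hij : (i : ℕ) + 1 ≤ j := hij
  induction j, hij using Nat.le_induction with
  | base => exact hsucc _ _ rfl
  | succ k hik ih =>
    have hk : k < N := by omega
    have h := g.lie_mem (ih hk) (hsucc ⟨k, hk⟩ ⟨k + 1, hj⟩ rfl)
    rwa [lie_Vmat_Vmat (Fin.ne_of_val_ne (show (i : ℕ) ≠ k by omega))
      (Fin.ne_of_val_ne (show k ≠ k + 1 by omega))] at h

lemma Vmat_mem (hlt : ∀ i j : Fin N, i < j → Vmat N i j ∈ g) (i j : Fin N) : Vmat N i j ∈ g := by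
  obtain hij | rfl | hji := lt_trichotomy i j
  · exact hlt i j hij
  · rw [Vmat_self]
    exact g.zero_mem
  · rw [Vmat_comm]
    exact g.smul_mem _ (hlt j i hji)

lemma Wmat_mem (hV : ∀ i j, Vmat N i j ∈ g) (hWii : ∀ i, Wmat N i i ∈ g) (i j : Fin N) :
    Wmat N i j ∈ g := by
  obtain rfl | hij := eq_or_ne i j
  · exact hWii i
  · have h := g.lie_mem (hV i j) (hWii j)
    rw [lie_Vmat_Wmat_self hij] at h
    exact (g.toSubmodule.smul_mem_iff (two_ne_zero' ℝ)).1 h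

end Generation

end Spo

open Spo

theorem stmt7_general (N : ℕ)
    (g : LieSubalgebra ℝ (Matrix (Fin N ⊕ Fin N) (Fin N ⊕ Fin N) ℝ))
    (hsub : (g : Set (Matrix (Fin N ⊕ Fin N) (Fin N ⊕ Fin N) ℝ)) ⊆ spoSet N)
    (hWii : ∀ i : Fin N, Wmat N i i ∈ g)
    (hWsucc : ∀ i j : Fin N, (j : ℕ) = (i : ℕ) + 1 → Wmat N i j ∈ g) :
    (g : Set (Matrix (Fin N ⊕ Fin N) (Fin N ⊕ Fin N) ℝ)) = spoSet N := by
  have hV : ∀ i j, Vmat N i j ∈ g :=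
    Vmat_mem fun _ _ => Vmat_mem_of_lt fun _ _ => Vmat_mem_of_val_eq_succ hWii hWsucc
  exact hsub.antisymm
    (spoSet_subset_of_forall_mem (p := g.toSubmodule) hV (Wmat_mem hV hWii))

/-- if a Lie subalgebra `g ⊆ spo_N(ℝ)` contains all the `W_{ii}` and all the
`W_{i,i+1}`, then `g = spo_N(ℝ)`. -/
theorem stmt7 (N : ℕ) (hN : 1 ≤ N)
    (g : LieSubalgebra ℝ (Matrix (Fin N ⊕ Fin N) (Fin N ⊕ Fin N) ℝ))
    (hsub : (g : Set (Matrix (Fin N ⊕ Fin N) (Fin N ⊕ Fin N) ℝ)) ⊆ spoSet N)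
    (hWii : ∀ i : Fin N, Wmat N i i ∈ g)
    (hWsucc : ∀ i j : Fin N, (j : ℕ) = (i : ℕ) + 1 → Wmat N i j ∈ g) :
    (g : Set (Matrix (Fin N ⊕ Fin N) (Fin N ⊕ Fin N) ℝ)) = spoSet N :=
  stmt7_general N g hsub hWii hWsucc

end
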